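/- There exists an incomplete profile P for which the inclusion WP(P) ⊆ WP(M(P)) is strict. Concretely, let Ω = {A, B, C} and let P consist of a single agent of weight 1 whose partial order declares only A > B. Then B ∈ WP(M(P)) but B ∉ WP(P): there is a tournament extending M(P) and an agenda in which B wins, yet in no completion of P and no agenda does B win. -/

import Mathlib

open scoped Classical

/-- An agenda: a binary tree whose leaves are labelled with candidates. -/
inductive Agenda (α : Type) : Type
  | leaf (a : α) : Agenda α
  | node (l r : Agenda α) : Agenda α

namespace Agenda

/-- The list of leaf labels of an agenda. -/
def leaves {α : Type} : Agenda α → List α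
  | leaf a => [a]
  | node l r => leaves l ++ leaves r

/-- The list of depths of the leaves of an agenda. -/
def depths {α : Type} : Agenda α → List ℕ
  | leaf _ => [0]
  | node l r => (depths l ++ depths r).map (· + 1)

end Agenda

/-- A valid agenda: leaves labelled bijectively with the candidates. -/
def IsAgenda {α : Type} [Fintype α] (t : Agenda α) : Prop :=
  t.leaves.Nodup ∧ ∀ a : α, a ∈ t.leaves

/-- A balanced agenda: max and min leaf depths differ by at most 1. -/
def IsBalanced {α : Type} (t : Agenda α) : Prop :=
  ∀ d₁ ∈ t.depths, ∀ d₂ ∈ t.depths, d₁ ≤ d₂ + 1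

/-- A tournament: complete asymmetric directed graph on the candidates. -/
def IsTournament {α : Type} (T : α → α → Prop) : Prop :=
  (∀ a, ¬ T a a) ∧ ∀ a b : α, a ≠ b → (T a b ↔ ¬ T b a)

/-- Winner of an agenda under a tournament: each internal node is won by
whichever child's winner beats the other; the root's candidate wins. -/
noncomputable def winner {α : Type} (T : α → α → Prop) : Agenda α → α
  | .leaf a => a
  | .node l r => if T (winner T l) (winner T r) then winner T l else winner T r

/-- Strict partial order: asymmetric and transitive. -/
def IsSPO {α : Type} (r : α → α → Prop) : Prop :=
  (∀ a b, r a b → ¬ r b a) ∧ (∀ a b c, r a b → r b c → r a c)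

/-- Strict total order. -/
def IsSTO {α : Type} (r : α → α → Prop) : Prop :=
  IsSPO r ∧ ∀ a b : α, a ≠ b → r a b ∨ r b a

/-- An (incomplete) weighted profile: a finite sequence of agents, each with a
positive weight and a strict partial order, the sum of weights being odd. -/
structure Profile (α : Type) where
  agents : List (ℕ × (α → α → Prop))
  pos : ∀ p ∈ agents, 0 < p.1
  spo : ∀ p ∈ agents, IsSPO p.2
  oddSum : Odd (agents.map Prod.fst).sum

/-- Total weight of agents preferring `a` to `b`. -/
noncomputable def prefWeight {α : Type} (P : Profile α) (a b : α) : ℕ :=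
  (P.agents.map (fun p => if p.2 a b then p.1 else 0)).sum

/-- The majority graph of a profile. -/
def maj {α : Type} (P : Profile α) (a b : α) : Prop :=
  prefWeight P b a < prefWeight P a b

/-- `Q` is a completion of `P`: same weights, each agent's partial order is
replaced by a strict total order extending it. -/
def IsCompletion {α : Type} (P Q : Profile α) : Prop :=
  List.Forall₂ (fun p q => p.1 = q.1 ∧ IsSTO q.2 ∧ ∀ a b, p.2 a b → q.2 a b)
    P.agents Q.agents

/-- `T` extends the (incomplete majority) graph `G`. -/
def Extends {α : Type} (G T : α → α → Prop) : Prop := ∀ a b, G a b → T a b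

/-- `A` wins some agenda under `T`. -/
def WinsSome {α : Type} [Fintype α] (T : α → α → Prop) (A : α) : Prop :=
  ∃ t : Agenda α, IsAgenda t ∧ winner T t = A

/-- `A` wins every agenda under `T`. -/
def WinsAll {α : Type} [Fintype α] (T : α → α → Prop) (A : α) : Prop :=
  ∀ t : Agenda α, IsAgenda t → winner T t = A

/-- `A` wins some balanced agenda under `T`. -/
def FWinsSome {α : Type} [Fintype α] (T : α → α → Prop) (A : α) : Prop :=
  ∃ t : Agenda α, IsAgenda t ∧ IsBalanced t ∧ winner T t = A

/-- `A` wins every balanced agenda under `T`. -/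
def FWinsAll {α : Type} [Fintype α] (T : α → α → Prop) (A : α) : Prop :=
  ∀ t : Agenda α, IsAgenda t → IsBalanced t → winner T t = A

/-- Weak possible winner of a profile. -/
def WPp {α : Type} [Fintype α] (P : Profile α) (A : α) : Prop :=
  ∃ Q : Profile α, IsCompletion P Q ∧ WinsSome (maj Q) A

/-- Strong possible winner of a profile. -/
def SPp {α : Type} [Fintype α] (P : Profile α) (A : α) : Prop :=
  ∀ Q : Profile α, IsCompletion P Q → WinsSome (maj Q) A

/-- Weak Condorcet winner of a profile. -/
def WCp {α : Type} [Fintype α] (P : Profile α) (A : α) : Prop :=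
  ∃ Q : Profile α, IsCompletion P Q ∧ WinsAll (maj Q) A

/-- Strong Condorcet winner of a profile. -/
def SCp {α : Type} [Fintype α] (P : Profile α) (A : α) : Prop :=
  ∀ Q : Profile α, IsCompletion P Q → WinsAll (maj Q) A

/-- Weak possible winner of an incomplete majority graph. -/
def WPg {α : Type} [Fintype α] (G : α → α → Prop) (A : α) : Prop :=
  ∃ T : α → α → Prop, IsTournament T ∧ Extends G T ∧ WinsSome T A

/-- Strong possible winner of an incomplete majority graph. -/
def SPg {α : Type} [Fintype α] (G : α → α → Prop) (A : α) : Prop :=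
  ∀ T : α → α → Prop, IsTournament T → Extends G T → WinsSome T A

/-- Weak Condorcet winner of an incomplete majority graph. -/
def WCg {α : Type} [Fintype α] (G : α → α → Prop) (A : α) : Prop :=
  ∃ T : α → α → Prop, IsTournament T ∧ Extends G T ∧ WinsAll T A

/-- Strong Condorcet winner of an incomplete majority graph. -/
def SCg {α : Type} [Fintype α] (G : α → α → Prop) (A : α) : Prop :=
  ∀ T : α → α → Prop, IsTournament T → Extends G T → WinsAll T A

/-- A profile is unweighted if every agent has weight 1. -/
def IsUnweighted {α : Type} (P : Profile α) : Prop :=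
  ∀ p ∈ P.agents, p.1 = 1

/-- `Q` is the unweighted profile corresponding to `P`: each agent of
weight `k` is replaced by `k` agents of weight 1 with the same order. -/
def IsUnwVersion {α : Type} (P Q : Profile α) : Prop :=
  Q.agents = P.agents.flatMap (fun p => List.replicate p.1 (1, p.2))

/-- Fair strong Condorcet winner of a profile (balanced agendas only). -/
def FSCp {α : Type} [Fintype α] (P : Profile α) (A : α) : Prop :=
  ∀ Q : Profile α, IsCompletion P Q → FWinsAll (maj Q) A

/-- Fair weak Condorcet winner of a profile (balanced agendas only). -/
def FWCp {α : Type} [Fintype α] (P : Profile α) (A : α) : Prop :=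
  ∃ Q : Profile α, IsCompletion P Q ∧ FWinsAll (maj Q) A

/-- Fair weak possible winner of a profile (balanced agendas only). -/
def FWPp {α : Type} [Fintype α] (P : Profile α) (A : α) : Prop :=
  ∃ Q : Profile α, IsCompletion P Q ∧ FWinsSome (maj Q) A

/-- The three candidates. -/
inductive Cand : Type
  | A | B | C
deriving DecidableEq

instance : Fintype Cand :=
  ⟨{Cand.A, Cand.B, Cand.C}, fun x => by cases x <;> simp⟩

/-- The single agent's incomplete preference: only `A > B` is declared. -/
def onlyAB : Cand → Cand → Prop := fun x y => x = Cand.A ∧ y = Cand.B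

/-- The profile with one agent of weight 1 declaring only `A > B`. -/
def P16 : Profile Cand where
  agents := [(1, onlyAB)]
  pos := by
    intro p hp
    simp only [List.mem_singleton] at hp
    subst hp; norm_num
  spo := by
    intro p hp
    simp only [List.mem_singleton] at hp
    subst hp
    constructor
    · rintro a b ⟨rfl, rfl⟩ ⟨h, -⟩; cases h
    · rintro a b c ⟨rfl, rfl⟩ ⟨h, -⟩; cases h
  oddSum := by simp

/-!
`B` wins an agenda under the 3-cycle `A → B → C → A`, which extends `M(P) = {A → B}`, by
meeting `A` only after `C` has eliminated it. But a completion of `P` is a single linear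
order `≻` with `A ≻ B`; its majority graph is `≻` itself, whose top element is a Condorcet
winner, so it wins every agenda, and it is not `B`.
-/

lemma winner_mem_leaves {α : Type} (T : α → α → Prop) (t : Agenda α) :
    winner T t ∈ t.leaves := by
  induction t with
  | leaf a => simp [winner, Agenda.leaves]
  | node l r ihl ihr =>
    rw [winner, Agenda.leaves, List.mem_append]
    split
    · exact Or.inl ihl
    · exact Or.inr ihr

lemma winner_eq_of_forall_beats {α : Type} {T : α → α → Prop}
    (hasymm : ∀ a b, T a b → ¬ T b a) {x : α} {t : Agenda α}
    (hx : x ∈ t.leaves) (hbeats : ∀ y ∈ t.leaves, y ≠ x → T x y) :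
    winner T t = x := by
  induction t with
  | leaf a => simpa [Agenda.leaves, winner, eq_comm] using hx
  | node l r ihl ihr =>
    simp only [Agenda.leaves, List.mem_append] at hx hbeats
    have beats_l : ∀ y ∈ l.leaves, y ≠ x → T x y := fun y hy => hbeats y (Or.inl hy)
    have beats_r : ∀ y ∈ r.leaves, y ≠ x → T x y := fun y hy => hbeats y (Or.inr hy)
    rcases hx with hx | hx
    · have hl := ihl hx beats_l
      by_cases hr : winner T r = x
      · simp [winner, hl, hr]
      · simp [winner, hl, beats_r _ (winner_mem_leaves T r) hr]
    · have hr := ihr hx beats_r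
      by_cases hl : winner T l = x
      · simp [winner, hl, hr]
      · simp [winner, hr, hasymm _ _ (beats_l _ (winner_mem_leaves T l) hl)]

lemma IsSTO.exists_forall_ne_rel {α : Type} [Finite α] [Nonempty α] {r : α → α → Prop}
    (hr : IsSTO r) : ∃ m, ∀ y, y ≠ m → r m y := by
  have : IsTrans α r := ⟨hr.1.2⟩
  have : Std.Irrefl r := ⟨fun a h => hr.1.1 a a h h⟩
  obtain ⟨m, -, hmin⟩ :=
    (Finite.wellFounded_of_trans_of_irrefl r).has_min Set.univ Set.univ_nonempty
  exact ⟨m, fun y hy => (hr.2 y m hy).resolve_left (hmin y trivial)⟩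

lemma maj_iff_of_agents_eq_singleton {α : Type} {P : Profile α} {w : ℕ} {r : α → α → Prop}
    (hP : P.agents = [(w, r)]) (a b : α) : maj P a b ↔ r a b := by
  have hw : 0 < w := P.pos (w, r) (by simp [hP])
  have hasymm : r a b → ¬ r b a := (P.spo (w, r) (by simp [hP])).1 a b
  by_cases hab : r a b <;> simp [maj, prefWeight, hP, hab, hasymm, hw]

lemma IsCompletion.exists_of_agents_eq_singleton {α : Type} {P Q : Profile α} {w : ℕ}
    {p : α → α → Prop} (hP : P.agents = [(w, p)]) (hQ : IsCompletion P Q) :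
    ∃ q, Q.agents = [(w, q)] ∧ IsSTO q ∧ ∀ a b, p a b → q a b := by
  rw [IsCompletion, hP, List.forall₂_cons_left_iff] at hQ
  obtain ⟨⟨w', q⟩, rest, ⟨rfl, hsto, hext⟩, hrest, hagents⟩ := hQ
  rw [List.forall₂_nil_left_iff] at hrest
  exact ⟨q, by rw [hagents, hrest], hsto, hext⟩

lemma WPp.exists_sto_top_of_agents_eq_singleton {α : Type} [Fintype α] {P : Profile α}
    {w : ℕ} {p : α → α → Prop} (hP : P.agents = [(w, p)]) {x : α} (hx : WPp P x) :
    ∃ q, IsSTO q ∧ (∀ a b, p a b → q a b) ∧ ∀ y, y ≠ x → q x y := by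
  obtain ⟨Q, hQ, t, ht, rfl⟩ := hx
  obtain ⟨q, hQq, hsto, hext⟩ := hQ.exists_of_agents_eq_singleton hP
  have hmaj := maj_iff_of_agents_eq_singleton hQq
  have : Nonempty α := ⟨winner (maj Q) t⟩
  obtain ⟨m, hm⟩ := hsto.exists_forall_ne_rel
  have hwin : winner (maj Q) t = m :=
    winner_eq_of_forall_beats (fun a b => by simpa only [hmaj] using hsto.1.1 a b) (ht.2 m)
      (fun y _ hy => (hmaj m y).2 (hm y hy))
  exact ⟨q, hsto, hext, hwin ▸ hm⟩

def cycleABC : Cand → Cand → Prop := fun x y =>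
  (x = Cand.A ∧ y = Cand.B) ∨ (x = Cand.B ∧ y = Cand.C) ∨ (x = Cand.C ∧ y = Cand.A)

lemma isTournament_cycleABC : IsTournament cycleABC := by
  constructor
  · intro a; cases a <;> simp [cycleABC]
  · intro a b hab; cases a <;> cases b <;> simp_all [cycleABC]

lemma isAgenda_AC_B : IsAgenda (.node (.node (.leaf Cand.A) (.leaf Cand.C)) (.leaf Cand.B)) :=
  ⟨by simp [Agenda.leaves], fun a => by cases a <;> simp [Agenda.leaves]⟩

/-- The inclusion `WP(P) ⊆ WP(M(P))` can be strict:
for the profile `P16`, candidate `B` is a weak possible winner of the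
majority graph `M(P16)` but not a weak possible winner of `P16`. -/
theorem stmt16 : WPg (maj P16) Cand.B ∧ ¬ WPp P16 Cand.B := by
  have hP16 : P16.agents = [(1, onlyAB)] := rfl
  constructor
  · refine ⟨cycleABC, isTournament_cycleABC, ?_, _, isAgenda_AC_B, by simp [winner, cycleABC]⟩
    intro a b hab
    exact Or.inl ((maj_iff_of_agents_eq_singleton hP16 a b).1 hab)
  · intro hB
    obtain ⟨q, hsto, hext, htop⟩ := hB.exists_sto_top_of_agents_eq_singleton hP16
    exact hsto.1.1 _ _ (hext _ _ ⟨rfl, rfl⟩) (htop Cand.A (by decide))
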